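/- Let D₁ and D₂ be real symmetric positive semi-definite 3×3 matrices. If the orientationally-averaged signals for rank-1 measurement tensors agree for all strengths, i.e. S̄(D₁, diag(d,0,0)) = S̄(D₂, diag(d,0,0)) for every d ≥ 0, then D₁ and D₂ have the same characteristic polynomial, i.e. the same eigenvalues with multiplicity. -/

import Mathlib

open Matrix MeasureTheory

noncomputable section

abbrev Mat3 := Matrix (Fin 3) (Fin 3) ℝ

/-- The special orthogonal group SO(3) as a submonoid of 3×3 real matrices:
matrices `R` with `Rᵀ * R = 1` and `det R = 1`. -/
def SO3 : Submonoid Mat3 where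
  carrier := {R | Rᵀ * R = 1 ∧ R.det = 1}
  one_mem' := ⟨by simp, by simp⟩
  mul_mem' := by
    rintro A B ⟨hA1, hA2⟩ ⟨hB1, hB2⟩
    refine ⟨?_, by rw [Matrix.det_mul, hA2, hB2, one_mul]⟩
    rw [Matrix.transpose_mul, Matrix.mul_assoc, ← Matrix.mul_assoc Aᵀ, hA1, Matrix.one_mul, hB1]

instance : Group SO3 :=
  { (inferInstance : Monoid SO3) with
    inv := fun A => ⟨A.1ᵀ, by
      refine ⟨?_, by rw [Matrix.det_transpose]; exact A.2.2⟩
      rw [Matrix.transpose_transpose, mul_eq_one_comm]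
      exact A.2.1⟩
    inv_mul_cancel := fun A => Subtype.ext A.2.1 }

instance : IsTopologicalGroup SO3 where
  continuous_mul := Continuous.subtype_mk
    (((continuous_subtype_val.comp continuous_fst).matrix_mul
      (continuous_subtype_val.comp continuous_snd))) _
  continuous_inv := Continuous.subtype_mk continuous_subtype_val.matrix_transpose _

theorem SO3_isCompact : IsCompact (SO3 : Set Mat3) := by
  have hsub : (SO3 : Set Mat3) ⊆
      Set.univ.pi (fun _ : Fin 3 => Set.univ.pi fun _ : Fin 3 => Set.Icc (-1:ℝ) 1) := by
    rintro R ⟨hR1, -⟩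
    refine Set.mem_univ_pi.mpr fun i => Set.mem_univ_pi.mpr fun j => ?_
    have h1 : (Rᵀ * R) j j = (1 : Mat3) j j := by rw [hR1]
    have h2 : ∑ k, R k j ^ 2 = 1 := by
      simpa [Matrix.mul_apply, Matrix.transpose_apply, Matrix.one_apply, sq] using h1
    have h3 : R i j ^ 2 ≤ 1 := by
      rw [← h2]
      exact Finset.single_le_sum (fun k _ => sq_nonneg (R k j)) (Finset.mem_univ i)
    exact Set.mem_Icc.mpr (abs_le.mp ((sq_le_one_iff_abs_le_one (a := R i j)).mp h3))
  exact IsCompact.of_isClosed_subset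
    (isCompact_univ_pi fun _ => isCompact_univ_pi fun _ => isCompact_Icc)
    (IsClosed.inter
      (isClosed_singleton.preimage (continuous_id.matrix_transpose.matrix_mul continuous_id))
      (isClosed_singleton.preimage continuous_id.matrix_det))
    hsub

instance : CompactSpace SO3 := isCompact_iff_compactSpace.mp SO3_isCompact

instance : MeasurableSpace SO3 := borel _
instance : BorelSpace SO3 := ⟨rfl⟩

/-- The Haar probability measure on the compact group SO(3)
(normalized so that the whole group has measure 1). -/
def μSO3 : Measure SO3 := Measure.haarMeasure ⊤

/-- The orientationally-averaged signal
`S̄(D,B) = ∫_{SO(3)} exp(−tr(D·R·B·Rᵀ)) dμ(R)`. -/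
def Sbar (D B : Mat3) : ℝ :=
  ∫ R : SO3, Real.exp (-(D * R.1 * B * R.1ᵀ).trace) ∂μSO3

/-- `dg a b c` is the diagonal 3×3 matrix with diagonal entries `a`, `b`, `c`. -/
def dg (x y z : ℝ) : Mat3 := Matrix.diagonal ![x, y, z]

/-- The error function `erf x = (2/√π) ∫₀ˣ exp(−t²) dt`. -/
def erf (x : ℝ) : ℝ := (2 / Real.sqrt Real.pi) * ∫ t in (0:ℝ)..x, Real.exp (-t^2)

/-- The rising factorial (Pochhammer symbol) `(q)ₖ = q(q+1)⋯(q+k−1)`. -/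
def poch (q : ℝ) (k : ℕ) : ℝ := (ascPochhammer ℝ k).eval q

/-- The Gauss hypergeometric polynomial `₂F₁(1/2, −n; 1; x) = ∑_{k=0}^n ((1/2)ₖ(−n)ₖ/((1)ₖ k!)) xᵏ`. -/
def F21half (n : ℕ) (x : ℝ) : ℝ :=
  ∑ k ∈ Finset.range (n+1),
    (poch (1/2) k * poch (-(n:ℝ)) k) / (poch 1 k * (Nat.factorial k)) * x^k

/-- The confluent hypergeometric function `₁F₁(α; β; x) = ∑ₖ ((α)ₖ/(β)ₖ) xᵏ/k!`. -/
def F11 (α β x : ℝ) : ℝ := ∑' k : ℕ, (poch α k / poch β k) * x^k / (Nat.factorial k)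

/-- The modified Bessel function of the first kind of integer order `m`:
`I_m(x) = ∑ⱼ (x/2)^{m+2j}/(j!(m+j)!)`. -/
def besselI (m : ℕ) (x : ℝ) : ℝ :=
  ∑' j : ℕ, (x/2)^(m+2*j) / ((Nat.factorial j) * (Nat.factorial (m+j)))

/-- The regularized Gauss hypergeometric function
`₂F̃₁(α, β; γ; x) = ∑ₖ (α)ₖ(β)ₖ xᵏ/(Γ(γ+k) k!)`, with `1/Γ` vanishing at nonpositive integers
(note `Real.Gamma` is defined to be `0` there, and `x/0 = 0` in Lean). -/
def regF21 (α β γ x : ℝ) : ℝ :=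
  ∑' k : ℕ, (poch α k * poch β k) * x^k / (Real.Gamma (γ + k) * (Nat.factorial k))

end

/-!
Writing `u` for the first column of `R`, one has `tr(D R diag(d,0,0) Rᵀ) = d · uᵀDu`, so
`S̄(D, diag(d,0,0))` is the moment generating function at `-d` of the bounded random variable
`uᵀDu` on `SO(3)`. That function is real analytic on all of `ℝ`, so agreement for `d ≥ 0` forces
agreement everywhere and hence equality of all moments `∫ (uᵀDu)ⁿ`. By Haar invariance these
moments do not change when `D` is replaced by a diagonal matrix `Rᵀ D R` with its eigenvalues,
and for `n = 1, 2, 3` they are explicit polynomials in the elementary symmetric functions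
`e₁, e₂, e₃` of the eigenvalues which can be solved for `e₁, e₂, e₃`.

The mixed moments of `u` needed for this follow from `|u| = 1` and invariance under a few explicit
rotations; the rotation with cosine `3/5` and sine `4/5` yields `∫ u₀⁴ = 3 ∫ u₀²u₁²` and
`∫ u₀⁶ = 5 ∫ u₀⁴u₁²` without square roots.
-/

open Matrix MeasureTheory ProbabilityTheory Filter Topology Polynomial

lemma moment_eq_of_mgf_eq_of_nonpos {Ω Ω' : Type*} {mΩ : MeasurableSpace Ω}
    {mΩ' : MeasurableSpace Ω'} {X : Ω → ℝ} {Y : Ω' → ℝ} {μ : Measure Ω} {ν : Measure Ω'}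
    (hX : ∀ t, Integrable (fun ω ↦ Real.exp (t * X ω)) μ)
    (hY : ∀ t, Integrable (fun ω ↦ Real.exp (t * Y ω)) ν)
    (h : ∀ t ≤ 0, mgf X μ t = mgf Y ν t) (n : ℕ) : μ[X ^ n] = ν[Y ^ n] := by
  have hXU : integrableExpSet X μ = Set.univ := Set.eq_univ_of_forall hX
  have hYU : integrableExpSet Y ν = Set.univ := Set.eq_univ_of_forall hY
  have hfX : AnalyticOnNhd ℝ (mgf X μ) Set.univ := by
    simpa [hXU] using analyticOnNhd_mgf (X := X) (μ := μ)
  have hfY : AnalyticOnNhd ℝ (mgf Y ν) Set.univ := by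
    simpa [hYU] using analyticOnNhd_mgf (X := Y) (μ := ν)
  have hfreq : ∃ᶠ t in 𝓝[≠] (0 : ℝ), mgf X μ t = mgf Y ν t :=
    ((eventually_nhdsWithin_of_forall (s := Set.Iio 0) fun t ht ↦ h t (le_of_lt ht)).frequently
      ).filter_mono (nhdsWithin_mono _ fun t ht ↦ ne_of_lt ht)
  have h0 : (0 : ℝ) ∈ interior (integrableExpSet X μ) := by simp [hXU]
  have h0' : (0 : ℝ) ∈ interior (integrableExpSet Y ν) := by simp [hYU]
  rw [← iteratedDeriv_mgf_zero h0, hfX.eq_of_frequently_eq hfY hfreq, iteratedDeriv_mgf_zero h0']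

lemma dotProduct_mulVec_mulVec {m : Type*} [Fintype m] {α : Type*} [CommSemiring α]
    (A D : Matrix m m α) (u : m → α) :
    (A *ᵥ u) ⬝ᵥ D *ᵥ (A *ᵥ u) = u ⬝ᵥ (Aᵀ * D * A) *ᵥ u := by
  rw [← mulVec_mulVec, ← mulVec_mulVec, dotProduct_mulVec u, vecMul_transpose]

lemma prod_X_sub_C_fin_three (u : Fin 3 → ℝ) :
    ∏ i, (X - C (u i)) = X ^ 3 - C (u 0 + u 1 + u 2) * X ^ 2
      + C (u 0 * u 1 + u 0 * u 2 + u 1 * u 2) * X - C (u 0 * u 1 * u 2) := by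
  simp only [Fin.prod_univ_three, map_add, map_mul]
  ring

instance : IsProbabilityMeasure μSO3 :=
  ⟨by rw [μSO3, ← TopologicalSpace.PositiveCompacts.coe_top]; exact Measure.haarMeasure_self⟩

instance : μSO3.IsMulLeftInvariant := by
  unfold μSO3; infer_instance

lemma Continuous.integrable_μSO3 {f : SO3 → ℝ} (hf : Continuous f) : Integrable f μSO3 :=
  hf.integrable_of_hasCompactSupport (HasCompactSupport.of_compactSpace f)

def firstCol (R : SO3) : Fin 3 → ℝ := (R : Mat3)ᵀ 0

lemma continuous_firstCol_apply (i : Fin 3) : Continuous fun R ↦ firstCol R i :=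
  (continuous_apply_apply i 0).comp continuous_subtype_val

lemma firstCol_mul (g R : SO3) : firstCol (g * R) = (g : Mat3) *ᵥ firstCol R := by
  ext i; simp [firstCol, mul_apply, mulVec, dotProduct]

lemma integral_comp_mulVec_firstCol (g : SO3) (f : (Fin 3 → ℝ) → ℝ) :
    ∫ R, f ((g : Mat3) *ᵥ firstCol R) ∂μSO3 = ∫ R, f (firstCol R) ∂μSO3 := by
  simp_rw [← firstCol_mul]
  exact integral_mul_left_eq_self (fun R ↦ f (firstCol R)) g

lemma firstCol_sq_add_sq_add_sq (R : SO3) :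
    firstCol R 0 ^ 2 + firstCol R 1 ^ 2 + firstCol R 2 ^ 2 = 1 := by
  simpa [firstCol, mul_apply, Fin.sum_univ_three, one_apply, sq]
    using congrFun (congrFun R.2.1 0) 0

lemma trace_mul_dg_mul_transpose (D R : Mat3) (d : ℝ) :
    (D * R * dg d 0 0 * Rᵀ).trace = d * (Rᵀ 0 ⬝ᵥ D *ᵥ Rᵀ 0) := by
  simp [trace, mul_apply, dg, dotProduct, mulVec, Fin.sum_univ_three]
  ring

def cyclePerm : SO3 := ⟨!![0, 1, 0; 0, 0, 1; 1, 0, 0], by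
  refine ⟨?_, by simp [det_fin_three]⟩
  ext i j; fin_cases i <;> fin_cases j <;> simp [mul_apply, Fin.sum_univ_three]⟩

def rotZ (c s : ℝ) (h : c ^ 2 + s ^ 2 = 1) : SO3 := ⟨!![c, s, 0; -s, c, 0; 0, 0, 1], by
  refine ⟨?_, by simp [det_fin_three]; linear_combination h⟩
  ext i j; fin_cases i <;> fin_cases j <;> simp [mul_apply, Fin.sum_univ_three] <;>
    ring_nf <;> linear_combination h⟩

lemma cyclePerm_mulVec (u : Fin 3 → ℝ) : (cyclePerm : Mat3) *ᵥ u = ![u 1, u 2, u 0] := by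
  ext i; fin_cases i <;> simp [cyclePerm, mulVec, dotProduct, Fin.sum_univ_three]

lemma rotZ_mulVec (c s : ℝ) (h : c ^ 2 + s ^ 2 = 1) (u : Fin 3 → ℝ) :
    (rotZ c s h : Mat3) *ᵥ u = ![c * u 0 + s * u 1, -s * u 0 + c * u 1, u 2] := by
  ext i; fin_cases i <;> simp [rotZ, mulVec, dotProduct, Fin.sum_univ_three]

noncomputable def colMoment (a b c : ℕ) : ℝ :=
  ∫ R, firstCol R 0 ^ a * firstCol R 1 ^ b * firstCol R 2 ^ c ∂μSO3

lemma integrable_firstCol_monomial (a b c : ℕ) :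
    Integrable (fun R ↦ firstCol R 0 ^ a * firstCol R 1 ^ b * firstCol R 2 ^ c) μSO3 :=
  Continuous.integrable_μSO3 <| (((continuous_firstCol_apply 0).pow a).mul
    ((continuous_firstCol_apply 1).pow b)).mul ((continuous_firstCol_apply 2).pow c)

lemma colMoment_eq_integral_mulVec (g : SO3) (a b c : ℕ) :
    colMoment a b c = ∫ R, ((g : Mat3) *ᵥ firstCol R) 0 ^ a * ((g : Mat3) *ᵥ firstCol R) 1 ^ b
      * ((g : Mat3) *ᵥ firstCol R) 2 ^ c ∂μSO3 :=
  (integral_comp_mulVec_firstCol g fun u ↦ u 0 ^ a * u 1 ^ b * u 2 ^ c).symm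

lemma colMoment_zero : colMoment 0 0 0 = 1 := by
  simp [colMoment]

lemma colMoment_add_two (a b c : ℕ) :
    colMoment (a + 2) b c + colMoment a (b + 2) c + colMoment a b (c + 2) = colMoment a b c := by
  have hm := integrable_firstCol_monomial
  rw [colMoment, colMoment, colMoment, ← integral_add (hm _ _ _) (hm _ _ _),
    ← integral_add (by exact (hm _ _ _).add (hm _ _ _)) (hm _ _ _), colMoment]
  congr 1 with R
  linear_combination (firstCol R 0 ^ a * firstCol R 1 ^ b * firstCol R 2 ^ c) *
    firstCol_sq_add_sq_add_sq R

lemma colMoment_cycle (a b c : ℕ) : colMoment a b c = colMoment c a b := by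
  rw [colMoment_eq_integral_mulVec cyclePerm]
  simp only [cyclePerm_mulVec, colMoment]
  congr 1 with R
  simp
  ring

lemma colMoment_swap (a b c : ℕ) : colMoment a b c = (-1) ^ b * colMoment b a c := by
  rw [colMoment_eq_integral_mulVec (rotZ 0 1 (by norm_num)), colMoment, ← integral_const_mul]
  simp only [rotZ_mulVec]
  congr 1 with R
  simp
  ring

lemma colMoment_eq_zero_of_odd_add {a b c : ℕ} (h : Odd (a + b)) : colMoment a b c = 0 := by
  have hneg : colMoment a b c = -colMoment a b c := by
    conv_lhs => rw [colMoment_eq_integral_mulVec (rotZ (-1) 0 (by norm_num))]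
    rw [colMoment, ← integral_neg]
    congr 1 with R
    have hsign : (-1 : ℝ) ^ a * (-1) ^ b = -1 := by rw [← pow_add, h.neg_one_pow]
    simp [rotZ_mulVec, neg_pow (firstCol R 0), neg_pow (firstCol R 1)]
    linear_combination (firstCol R 0 ^ a * firstCol R 1 ^ b * firstCol R 2 ^ c) * hsign
  linarith

lemma colMoment_rotZ (c s : ℝ) (h : c ^ 2 + s ^ 2 = 1) (n m : ℕ) :
    colMoment n 0 m = ∑ k ∈ Finset.range (n + 1),
      c ^ k * s ^ (n - k) * n.choose k * colMoment k (n - k) m := by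
  rw [colMoment_eq_integral_mulVec (rotZ c s h)]
  calc _ = ∫ R, ∑ k ∈ Finset.range (n + 1), c ^ k * s ^ (n - k) * n.choose k *
        (firstCol R 0 ^ k * firstCol R 1 ^ (n - k) * firstCol R 2 ^ m) ∂μSO3 := by
        congr 1 with R
        simp only [rotZ_mulVec, cons_val_zero, cons_val_one, cons_val, add_pow, mul_pow, pow_zero,
          mul_one, Finset.sum_mul]
        exact Finset.sum_congr rfl fun k _ ↦ by ring
    _ = _ := by
        rw [integral_finsetSum _ fun k _ ↦ (integrable_firstCol_monomial _ _ _).const_mul _]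
        simp_rw [integral_const_mul]
        rfl

lemma colMoment_eq_zero_of_odd {a b c : ℕ} (h : Odd (b + c)) : colMoment a b c = 0 := by
  rw [colMoment_cycle, colMoment_cycle]
  exact colMoment_eq_zero_of_odd_add h

lemma colMoment_degree_two :
    colMoment 2 0 0 = 1 / 3 ∧ colMoment 0 2 0 = 1 / 3 ∧ colMoment 0 0 2 = 1 / 3 := by
  have hsum := colMoment_add_two 0 0 0
  have h₁ := colMoment_cycle 2 0 0
  have h₂ := colMoment_cycle 0 2 0
  rw [colMoment_zero] at hsum
  refine ⟨?_, ?_, ?_⟩ <;> linarith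

lemma colMoment_degree_four :
    colMoment 4 0 0 = 1 / 5 ∧ colMoment 0 4 0 = 1 / 5 ∧ colMoment 0 0 4 = 1 / 5 ∧
      colMoment 2 2 0 = 1 / 15 ∧ colMoment 2 0 2 = 1 / 15 ∧ colMoment 0 2 2 = 1 / 15 := by
  have hsum := colMoment_add_two 2 0 0
  have hrot := colMoment_rotZ (3 / 5) (4 / 5) (by norm_num) 4 0
  simp [Finset.sum_range_succ, Nat.choose] at hrot
  have h₁ := colMoment_cycle 4 0 0
  have h₂ := colMoment_cycle 0 4 0
  have h₃ := colMoment_cycle 2 2 0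
  have h₄ := colMoment_cycle 0 2 2
  have z₁ : colMoment 3 1 0 = 0 := colMoment_eq_zero_of_odd (by decide)
  have z₂ : colMoment 1 3 0 = 0 := colMoment_eq_zero_of_odd (by decide)
  rw [colMoment_degree_two.1] at hsum
  refine ⟨?_, ?_, ?_, ?_, ?_, ?_⟩ <;> linarith

lemma colMoment_degree_six :
    colMoment 6 0 0 = 1 / 7 ∧ colMoment 0 6 0 = 1 / 7 ∧ colMoment 0 0 6 = 1 / 7 ∧
      colMoment 4 2 0 = 1 / 35 ∧ colMoment 4 0 2 = 1 / 35 ∧ colMoment 2 4 0 = 1 / 35 ∧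
      colMoment 0 4 2 = 1 / 35 ∧ colMoment 2 0 4 = 1 / 35 ∧ colMoment 0 2 4 = 1 / 35 ∧
      colMoment 2 2 2 = 1 / 105 := by
  have hsum₁ := colMoment_add_two 4 0 0
  have hsum₂ := colMoment_add_two 2 2 0
  have hrot := colMoment_rotZ (3 / 5) (4 / 5) (by norm_num) 6 0
  simp [Finset.sum_range_succ, Nat.choose] at hrot
  have h₁ := colMoment_cycle 6 0 0
  have h₂ := colMoment_cycle 0 6 0
  have h₃ := colMoment_cycle 4 2 0
  have h₄ := colMoment_cycle 0 4 2
  have h₅ := colMoment_cycle 2 4 0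
  have h₆ := colMoment_cycle 0 2 4
  have hswap : colMoment 2 4 0 = colMoment 4 2 0 := by rw [colMoment_swap]; norm_num
  have z₁ : colMoment 5 1 0 = 0 := colMoment_eq_zero_of_odd (by decide)
  have z₂ : colMoment 3 3 0 = 0 := colMoment_eq_zero_of_odd (by decide)
  have z₃ : colMoment 1 5 0 = 0 := colMoment_eq_zero_of_odd (by decide)
  obtain ⟨h400, -, -, h220, -, -⟩ := colMoment_degree_four
  rw [h400] at hsum₁
  rw [h220] at hsum₂
  refine ⟨?_, ?_, ?_, ?_, ?_, ?_, ?_, ?_, ?_, ?_⟩ <;> linarith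

noncomputable def quadMoment (D : Mat3) (n : ℕ) : ℝ := ∫ R, (firstCol R ⬝ᵥ D *ᵥ firstCol R) ^ n ∂μSO3

lemma continuous_quadForm_firstCol (D : Mat3) :
    Continuous fun R ↦ firstCol R ⬝ᵥ D *ᵥ firstCol R := by
  have hcol : Continuous firstCol := continuous_pi continuous_firstCol_apply
  exact hcol.dotProduct (continuous_const.matrix_mulVec hcol)

lemma Sbar_dg_eq_mgf (D : Mat3) (d : ℝ) :
    Sbar D (dg d 0 0) = mgf (fun R ↦ firstCol R ⬝ᵥ D *ᵥ firstCol R) μSO3 (-d) := by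
  simp only [Sbar, mgf, trace_mul_dg_mul_transpose, neg_mul]
  rfl

lemma quadMoment_eq_of_Sbar_eq {D₁ D₂ : Mat3}
    (h : ∀ d : ℝ, 0 ≤ d → Sbar D₁ (dg d 0 0) = Sbar D₂ (dg d 0 0)) (n : ℕ) :
    quadMoment D₁ n = quadMoment D₂ n := by
  have hexp (D : Mat3) (t : ℝ) :
      Integrable (fun R ↦ Real.exp (t * (firstCol R ⬝ᵥ D *ᵥ firstCol R))) μSO3 :=
    ((continuous_const.mul (continuous_quadForm_firstCol D)).rexp).integrable_μSO3
  simpa [quadMoment] using moment_eq_of_mgf_eq_of_nonpos (hexp D₁) (hexp D₂)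
    (fun t ht ↦ by simpa [Sbar_dg_eq_mgf] using h (-t) (by linarith)) n

lemma quadMoment_transpose_mul_mul (D : Mat3) (g : SO3) (n : ℕ) :
    quadMoment ((g : Mat3)ᵀ * D * g) n = quadMoment D n := by
  simp_rw [quadMoment, ← dotProduct_mulVec_mulVec]
  exact integral_comp_mulVec_firstCol g fun u ↦ (u ⬝ᵥ D *ᵥ u) ^ n

lemma quadMoment_diagonal (w : Fin 3 → ℝ) (n : ℕ) :
    quadMoment (diagonal w) n = ∑ k ∈ Finset.range (n + 1), ∑ j ∈ Finset.range (n - k + 1),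
      w 0 ^ k * w 1 ^ j * w 2 ^ (n - k - j) * n.choose k * (n - k).choose j *
        colMoment (2 * k) (2 * j) (2 * (n - k - j)) := by
  have hq (u : Fin 3 → ℝ) :
      u ⬝ᵥ diagonal w *ᵥ u = w 0 * u 0 ^ 2 + (w 1 * u 1 ^ 2 + w 2 * u 2 ^ 2) := by
    simp [dotProduct, mulVec_diagonal, Fin.sum_univ_three]
    ring
  have hm := integrable_firstCol_monomial
  calc quadMoment (diagonal w) n
      = ∫ R, ∑ k ∈ Finset.range (n + 1), ∑ j ∈ Finset.range (n - k + 1),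
          w 0 ^ k * w 1 ^ j * w 2 ^ (n - k - j) * n.choose k * (n - k).choose j *
            (firstCol R 0 ^ (2 * k) * firstCol R 1 ^ (2 * j) * firstCol R 2 ^ (2 * (n - k - j)))
          ∂μSO3 := by
        rw [quadMoment]
        congr 1 with R
        rw [hq, add_pow]
        refine Finset.sum_congr rfl fun k _ ↦ ?_
        rw [add_pow, Finset.mul_sum, Finset.sum_mul]
        exact Finset.sum_congr rfl fun j _ ↦ by ring
    _ = _ := by
        rw [integral_finsetSum _ fun k _ ↦ integrable_finsetSum _ fun j _ ↦ (hm _ _ _).const_mul _]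
        refine Finset.sum_congr rfl fun k _ ↦ ?_
        rw [integral_finsetSum _ fun j _ ↦ (hm _ _ _).const_mul _]
        simp_rw [integral_const_mul]
        rfl

lemma quadMoment_diagonal_one (w : Fin 3 → ℝ) :
    quadMoment (diagonal w) 1 = (w 0 + w 1 + w 2) / 3 := by
  obtain ⟨h₁, h₂, h₃⟩ := colMoment_degree_two
  simp [quadMoment_diagonal, Finset.sum_range_succ, h₁, h₂, h₃]
  ring

lemma quadMoment_diagonal_two (w : Fin 3 → ℝ) :
    quadMoment (diagonal w) 2 =
      (3 * (w 0 + w 1 + w 2) ^ 2 - 4 * (w 0 * w 1 + w 0 * w 2 + w 1 * w 2)) / 15 := by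
  obtain ⟨h₁, h₂, h₃, h₄, h₅, h₆⟩ := colMoment_degree_four
  simp [quadMoment_diagonal, Finset.sum_range_succ, h₁, h₂, h₃, h₄, h₅, h₆]
  ring

lemma quadMoment_diagonal_three (w : Fin 3 → ℝ) :
    quadMoment (diagonal w) 3 = (5 * (w 0 + w 1 + w 2) ^ 3
      - 12 * (w 0 + w 1 + w 2) * (w 0 * w 1 + w 0 * w 2 + w 1 * w 2) + 8 * (w 0 * w 1 * w 2)) / 35 := by
  obtain ⟨h₁, h₂, h₃, h₄, h₅, h₆, h₇, h₈, h₉, h₁₀⟩ := colMoment_degree_six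
  simp [quadMoment_diagonal, Finset.sum_range_succ, h₁, h₂, h₃, h₄, h₅, h₆, h₇, h₈, h₉, h₁₀]
  ring

lemma prod_X_sub_C_eq_of_quadMoment_diagonal_eq {v w : Fin 3 → ℝ}
    (h₁ : quadMoment (diagonal v) 1 = quadMoment (diagonal w) 1)
    (h₂ : quadMoment (diagonal v) 2 = quadMoment (diagonal w) 2)
    (h₃ : quadMoment (diagonal v) 3 = quadMoment (diagonal w) 3) :
    ∏ i, (X - C (v i)) = ∏ i, (X - C (w i)) := by
  rw [quadMoment_diagonal_one, quadMoment_diagonal_one] at h₁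
  rw [quadMoment_diagonal_two, quadMoment_diagonal_two] at h₂
  rw [quadMoment_diagonal_three, quadMoment_diagonal_three] at h₃
  have he₁ : v 0 + v 1 + v 2 = w 0 + w 1 + w 2 := by linarith
  have he₂ : v 0 * v 1 + v 0 * v 2 + v 1 * v 2 = w 0 * w 1 + w 0 * w 2 + w 1 * w 2 := by
    linear_combination (3 / 4) * (v 0 + v 1 + v 2 + w 0 + w 1 + w 2) * he₁ - (15 / 4) * h₂
  have he₃ : v 0 * v 1 * v 2 = w 0 * w 1 * w 2 := by
    set a := v 0 + v 1 + v 2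
    set a' := w 0 + w 1 + w 2
    linear_combination (35 / 8) * h₃ - (5 / 8) * (a ^ 2 + a * a' + a' ^ 2) * he₁
      + (3 / 2) * (v 0 * v 1 + v 0 * v 2 + v 1 * v 2) * he₁ + (3 / 2) * a' * he₂
  rw [prod_X_sub_C_fin_three, prod_X_sub_C_fin_three, he₁, he₂, he₃]

lemma exists_SO3_eq_or_eq_neg {U : Mat3} (hU : Uᵀ * U = 1) :
    ∃ g : SO3, (g : Mat3) = U ∨ (g : Mat3) = -U := by
  have hdet : U.det * U.det = 1 := by
    simpa [det_mul, det_transpose] using congrArg det hU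
  rcases mul_self_eq_one_iff.mp hdet with h | h
  · exact ⟨⟨U, hU, h⟩, Or.inl rfl⟩
  · refine ⟨⟨-U, by simpa using hU, ?_⟩, Or.inr rfl⟩
    norm_num [det_neg, h]

lemma exists_SO3_transpose_mul_mul_eq_diagonal {D : Mat3} (hD : D.IsHermitian) :
    ∃ g : SO3, (g : Mat3)ᵀ * D * g = diagonal hD.eigenvalues := by
  set U : Mat3 := (hD.eigenvectorUnitary : Mat3)
  have hU : Uᵀ * U = 1 := by
    simpa [U, star_eq_conjTranspose] using (hD.eigenvectorUnitary).2.1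
  have hdiag : Uᵀ * D * U = diagonal hD.eigenvalues := by
    simpa [U, Unitary.conjStarAlgAut_star_apply, star_eq_conjTranspose]
      using hD.conjStarAlgAut_star_eigenvectorUnitary
  obtain ⟨g, hg | hg⟩ := exists_SO3_eq_or_eq_neg hU <;> exact ⟨g, by simpa [hg] using hdiag⟩

/-- if the orientationally-averaged signals of two positive semi-definite tensors
agree for all rank-1 measurement tensors `diag(d,0,0)`, `d ≥ 0`, then the tensors have the same
characteristic polynomial (same eigenvalues with multiplicity). -/
theorem stmt_16 (D₁ D₂ : Mat3) (h₁ : D₁.PosSemidef) (h₂ : D₂.PosSemidef)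
    (h : ∀ d : ℝ, 0 ≤ d → Sbar D₁ (dg d 0 0) = Sbar D₂ (dg d 0 0)) :
    D₁.charpoly = D₂.charpoly := by
  obtain ⟨g₁, hg₁⟩ := exists_SO3_transpose_mul_mul_eq_diagonal h₁.1
  obtain ⟨g₂, hg₂⟩ := exists_SO3_transpose_mul_mul_eq_diagonal h₂.1
  have hM (n : ℕ) : quadMoment (diagonal h₁.1.eigenvalues) n =
      quadMoment (diagonal h₂.1.eigenvalues) n := by
    rw [← hg₁, ← hg₂, quadMoment_transpose_mul_mul, quadMoment_transpose_mul_mul]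
    exact quadMoment_eq_of_Sbar_eq h n
  simpa [h₁.1.charpoly_eq, h₂.1.charpoly_eq]
    using prod_X_sub_C_eq_of_quadMoment_diagonal_eq (hM 1) (hM 2) (hM 3)
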